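/- arXiv:2009.02843 — 2 statements merged into one kernel-verified Lean document; each statement's English description precedes it below -/
import Mathlib

section
/- Let G be a group and let a, b, c, d ∈ G be elements satisfying the braid relations a*b*a = b*a*b and a*d*a = d*a*d, and the commutation relation b*d = d*b. Then b*a*c*b*a*b*d*a*d*b*a*d = (b*a*c*a⁻¹*b⁻¹) * (b*a*d⁻¹*a⁻¹*b⁻¹) * (d*a*b)^4. -/
/-- The purely group-theoretic key computation in Section 3: given braid relations
`a*b*a = b*a*b`, `a*d*a = d*a*d` and commutation `b*d = d*b`, we have
`b*a*c*b*a*b*d*a*d*b*a*d = (b*a*c*a⁻¹*b⁻¹) * (b*a*d⁻¹*a⁻¹*b⁻¹) * (d*a*b)^4`. -/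
theorem stmt0 {G : Type*} [Group G] (a b c d : G)
    (hab : a * b * a = b * a * b) (had : a * d * a = d * a * d)
    (hbd : b * d = d * b) :
    b * a * c * b * a * b * d * a * d * b * a * d =
      (b * a * c * a⁻¹ * b⁻¹) * (b * a * d⁻¹ * a⁻¹ * b⁻¹) * (d * a * b) ^ 4 := by
  have habx : ∀ x : G, a*(b*(a*x)) = b*(a*(b*x)) := fun x => by
    simp only [← mul_assoc]; rw [hab]
  have hadx : ∀ x : G, a*(d*(a*x)) = d*(a*(d*x)) := fun x => by
    simp only [← mul_assoc]; rw [had]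
  have hbdx : ∀ x : G, b*(d*x) = d*(b*x) := fun x => by
    simp only [← mul_assoc]; rw [hbd]
  have hbdt : b*d = d*b := hbd
  have key : b*(a*(d*(b*(a*(b*(d*(a*(d*(b*(a*d)))))))))) =
      d*(a*(b*(d*(a*(b*(d*(a*(b*(d*(a*b)))))))))) := by
    calc b*(a*(d*(b*(a*(b*(d*(a*(d*(b*(a*(d)))))))))))
      _ = b*(a*(d*(a*(b*(a*(d*(a*(d*(b*(a*(d))))))))))) := by conv_lhs => enter [2, 2, 2]; rw [← habx]
      _ = b*(d*(a*(d*(b*(a*(d*(a*(d*(b*(a*(d))))))))))) := by conv_lhs => enter [2]; rw [hadx]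
      _ = b*(d*(a*(d*(b*(a*(a*(d*(a*(b*(a*(d))))))))))) := by conv_lhs => enter [2, 2, 2, 2, 2, 2]; rw [← hadx]
      _ = b*(d*(a*(d*(b*(a*(a*(d*(b*(a*(b*(d))))))))))) := by conv_lhs => enter [2, 2, 2, 2, 2, 2, 2, 2]; rw [habx]
      _ = d*(b*(a*(d*(b*(a*(a*(d*(b*(a*(b*(d))))))))))) := by conv_lhs => rw [hbdx]
      _ = d*(b*(a*(d*(b*(a*(a*(d*(b*(a*(d*(b))))))))))) := by conv_lhs => enter [2, 2, 2, 2, 2, 2, 2, 2, 2, 2]; rw [hbdt]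
      _ = d*(b*(a*(b*(d*(a*(a*(d*(b*(a*(d*(b))))))))))) := by conv_lhs => enter [2, 2, 2]; rw [← hbdx]
      _ = d*(a*(b*(a*(d*(a*(a*(d*(b*(a*(d*(b))))))))))) := by conv_lhs => enter [2]; rw [← habx]
      _ = d*(a*(b*(d*(a*(d*(a*(d*(b*(a*(d*(b))))))))))) := by conv_lhs => enter [2, 2, 2]; rw [hadx]
      _ = d*(a*(b*(d*(a*(d*(a*(b*(d*(a*(d*(b))))))))))) := by conv_lhs => enter [2, 2, 2, 2, 2, 2, 2]; rw [← hbdx]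
      _ = d*(a*(b*(d*(a*(d*(a*(b*(a*(d*(a*(b))))))))))) := by conv_lhs => enter [2, 2, 2, 2, 2, 2, 2, 2]; rw [← hadx]
      _ = d*(a*(b*(d*(a*(d*(b*(a*(b*(d*(a*(b))))))))))) := by conv_lhs => enter [2, 2, 2, 2, 2, 2]; rw [habx]
      _ = d*(a*(b*(d*(a*(b*(d*(a*(b*(d*(a*(b))))))))))) := by conv_lhs => enter [2, 2, 2, 2, 2]; rw [← hbdx]

  simp only [pow_succ, pow_zero, one_mul, mul_assoc, inv_mul_cancel_left,
    mul_inv_cancel_left]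
  rw [← key]
  simp only [inv_mul_cancel_left]
end

section
/- Let G be a group and let a, b, d ∈ G be elements satisfying the braid relations a*b*a = b*a*b and a*d*a = d*a*d, and the commutation relation b*d = d*b. Then (b*a*d)*(b*a*b)*(d*a*d)*(b*a*d) = (d*a*b)^4. -/
/-- Core identity of the computation in Section 3: given braid relations
`a*b*a = b*a*b`, `a*d*a = d*a*d` and commutation `b*d = d*b`, we have
`(b*a*d)*(b*a*b)*(d*a*d)*(b*a*d) = (d*a*b)^4`. -/
theorem stmt1 {G : Type*} [Group G] (a b d : G)
    (hab : a * b * a = b * a * b) (had : a * d * a = d * a * d)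
    (hbd : b * d = d * b) :
    (b * a * d) * (b * a * b) * (d * a * d) * (b * a * d) = (d * a * b) ^ 4 := by
  have hab' : ∀ x : G, a * (b * (a * x)) = b * (a * (b * x)) := by
    intro x; rw [← mul_assoc, ← mul_assoc, hab, mul_assoc, mul_assoc]
  have hba' : ∀ x : G, b * (a * (b * x)) = a * (b * (a * x)) := fun x => (hab' x).symm
  have had' : ∀ x : G, a * (d * (a * x)) = d * (a * (d * x)) := by
    intro x; rw [← mul_assoc, ← mul_assoc, had, mul_assoc, mul_assoc]
  have hda' : ∀ x : G, d * (a * (d * x)) = a * (d * (a * x)) := fun x => (had' x).symm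
  have hbd' : ∀ x : G, b * (d * x) = d * (b * x) := by
    intro x; rw [← mul_assoc, hbd, mul_assoc]
  have hdb' : ∀ x : G, d * (b * x) = b * (d * x) := fun x => (hbd' x).symm
  rw [pow_succ, pow_succ, pow_succ, pow_one]
  simp only [mul_assoc]
  -- badbabdadbad
  rw [hba']   -- badabadadbad
  rw [hda']   -- badabaadabad
  rw [had']   -- bdadbaadabad
  rw [hab']   -- bdadbaadbabd
  rw [hbd]    -- bdadbaadbadb (end)
  rw [hdb']   -- bdabdaadbadb
  rw [hbd']   -- dbabdaadbadb
  rw [hba']   -- dabadaadbadb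
  rw [hdb']   -- dabadaabdadb
  rw [hda']   -- dabadaabadab
  rw [had']   -- dabdadabadab
  rw [hab']   -- dabdadbabdab
  rw [hdb']   -- dabdabdabdab
end
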